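/- arXiv:2407.04170 — 2 statements merged into one kernel-verified Lean document; each statement's English description precedes it below -/
import Mathlib

section
/- The affine hull of the image of a layer-normalization module with parameters α, β ∈ R^D (and any ε > 0) equals diag(α)·𝟙^⊥ + β, where 𝟙^⊥ is the orthogonal complement of the span of the all-ones vector. In particular, the image lies in an affine subspace of dimension at most D-1. -/
open scoped RealInnerProductSpace

theorem stmt1 (D : ℕ) (hD : 1 ≤ D) (α β : EuclideanSpace ℝ (Fin D)) (ε : ℝ) (hε : 0 < ε)
    (LN : EuclideanSpace ℝ (Fin D) → EuclideanSpace ℝ (Fin D))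
    (hLN : ∀ x, LN x = fun i => α i *
        ((x i - (∑ j, x j) / D) / Real.sqrt ((∑ j, (x j - (∑ j', x j') / D) ^ 2) / D + ε))
        + β i) :
    (affineSpan ℝ (Set.range LN) : Set (EuclideanSpace ℝ (Fin D))) =
      {y : EuclideanSpace ℝ (Fin D) | ∃ u : EuclideanSpace ℝ (Fin D),
        (∑ i, u i) = 0 ∧ y = fun i => α i * u i + β i} := by
  classical
  have hD0 : (D : ℝ) ≠ 0 := Nat.cast_ne_zero.mpr (by omega)
  let L : EuclideanSpace ℝ (Fin D) →ₗ[ℝ] EuclideanSpace ℝ (Fin D) :=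
    { toFun := fun u => WithLp.toLp 2 (fun i => α i * u i)
      map_add' := by
        intro u v; ext i
        show α i * (u i + v i) = α i * u i + α i * v i
        ring
      map_smul' := by
        intro c u; ext i
        show α i * (c * u i) = c * (α i * u i)
        ring }
  let sumL : EuclideanSpace ℝ (Fin D) →ₗ[ℝ] ℝ :=
    { toFun := fun u => ∑ i, u i
      map_add' := by
        intro u v
        show (∑ i, (u i + v i)) = _
        rw [Finset.sum_add_distrib]
      map_smul' := by
        intro c u
        show (∑ i, c * u i) = c * ∑ i, u i
        rw [Finset.mul_sum] }
  let S : AffineSubspace ℝ (EuclideanSpace ℝ (Fin D)) :=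
    AffineSubspace.mk' β ((LinearMap.ker sumL).map L)
  have hmemS : ∀ y : EuclideanSpace ℝ (Fin D),
      y ∈ S ↔ ∃ u : EuclideanSpace ℝ (Fin D),
        (∑ i, u i) = 0 ∧ y = fun i => α i * u i + β i := by
    intro y
    rw [AffineSubspace.mem_mk']
    simp only [Submodule.mem_map, LinearMap.mem_ker]
    constructor
    · rintro ⟨u, hu, huy⟩
      refine ⟨u, hu, ?_⟩
      funext i
      have h := congrFun (congrArg WithLp.ofLp huy) i
      simp only [L, LinearMap.coe_mk, AddHom.coe_mk] at h
      have h2 : (y -ᵥ β : EuclideanSpace ℝ (Fin D)) i = y i - β i := rfl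
      rw [h2] at h
      linarith
    · rintro ⟨u, hu, hy⟩
      refine ⟨u, hu, ?_⟩
      ext i
      show α i * u i = y i - β i
      simp only [hy]
      ring
  have hsub : Set.range LN ⊆ (S : Set (EuclideanSpace ℝ (Fin D))) := by
    rintro _ ⟨x, rfl⟩
    rw [SetLike.mem_coe, hmemS]
    refine ⟨WithLp.toLp 2 (fun i => (x i - (∑ j, x j) / D) /
        Real.sqrt ((∑ j, (x j - (∑ j', x j') / D) ^ 2) / D + ε)), ?_, ?_⟩
    · show ∑ i, (x i - (∑ j, x j) / D) / Real.sqrt ((∑ j, (x j - (∑ j', x j') / D) ^ 2) / D + ε) = 0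
      rw [← Finset.sum_div]
      have hz : ∑ i, (x i - (∑ j, x j) / D) = 0 := by
        rw [Finset.sum_sub_distrib, Finset.sum_const, Finset.card_univ, Fintype.card_fin,
          nsmul_eq_mul]
        field_simp
        ring
      rw [hz, zero_div]
    · exact hLN x
  refine Set.Subset.antisymm ?_ ?_
  · intro y hy
    have hle : affineSpan ℝ (Set.range LN) ≤ S := (affineSpan_le).mpr hsub
    exact (hmemS y).mp (hle hy)
  · rintro y ⟨u, hu, hy⟩
    obtain rfl : y = WithLp.toLp 2 (fun i => α i * u i + β i) := congrArg (WithLp.toLp 2) hy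
    set t : ℝ := Real.sqrt ((∑ j, (u j) ^ 2) / D + ε) with ht_def
    have ht : 0 < t := Real.sqrt_pos.mpr (by positivity)
    have h0 : LN 0 ∈ affineSpan ℝ (Set.range LN) := subset_affineSpan ℝ _ ⟨0, rfl⟩
    have hu' : LN u ∈ affineSpan ℝ (Set.range LN) := subset_affineSpan ℝ _ ⟨u, rfl⟩
    have hmem := AffineSubspace.smul_vsub_vadd_mem (affineSpan ℝ (Set.range LN)) t hu' h0 h0
    have key : (WithLp.toLp 2 (fun i => α i * u i + β i) : EuclideanSpace ℝ (Fin D)) =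
        t • (LN u -ᵥ LN 0) +ᵥ LN 0 := by
      ext i
      show α i * u i + β i = _
      have hLNu : LN u i = α i * (u i / t) + β i := by
        rw [hLN u]
        simp only [hu, zero_div, sub_zero, ht_def]
      have hLN0 : LN 0 i = β i := by
        rw [hLN 0]
        simp
      have hv : (t • (LN u -ᵥ LN 0) +ᵥ LN 0 : EuclideanSpace ℝ (Fin D)) i =
          t * (LN u i - LN 0 i) + LN 0 i := rfl
      rw [hv, hLNu, hLN0]
      field_simp
      ring
    rw [key]
    exact hmem
end

section
/- Let g : R^D → R^D be defined by g(x) := (x - E[x]𝟙)/√(Var[x] + ε) with ε > 0, where E[x] = (1/D)∑ᵢxᵢ and Var[x] = (1/D)‖x - E[x]𝟙‖₂². Then the image of g is contained in 𝟙^⊥, and the affine (indeed linear) hull of the image of g is exactly 𝟙^⊥ (for D ≥ 2). -/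
theorem stmt15 (D : ℕ) (hD : 2 ≤ D) (ε : ℝ) (hε : 0 < ε)
    (g : EuclideanSpace ℝ (Fin D) → EuclideanSpace ℝ (Fin D))
    (hg : ∀ x, g x = fun i => (x i - (∑ j, x j) / D) /
        Real.sqrt ((∑ j, (x j - (∑ j', x j') / D) ^ 2) / D + ε)) :
    (∀ x, ∑ i, g x i = 0) ∧
      (affineSpan ℝ (Set.range g) : Set (EuclideanSpace ℝ (Fin D))) =
        {u : EuclideanSpace ℝ (Fin D) | ∑ i, u i = 0} := by
  have hD0 : (D : ℝ) ≠ 0 := by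
    have : 0 < D := by omega
    exact_mod_cast this.ne'
  have hsum0 : ∀ x : EuclideanSpace ℝ (Fin D),
      ∑ i, (x i - (∑ j, x j) / D) = 0 := by
    intro x
    rw [Finset.sum_sub_distrib, Finset.sum_const, Finset.card_univ, Fintype.card_fin,
      nsmul_eq_mul]
    field_simp
    ring
  have h1 : ∀ x, ∑ i, g x i = 0 := by
    intro x
    simp only [hg]
    rw [← Finset.sum_div, hsum0, zero_div]
  refine ⟨h1, ?_⟩
  -- the linear functional u ↦ ∑ u i
  set f : EuclideanSpace ℝ (Fin D) →ₗ[ℝ] ℝ :=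
    { toFun := fun u => ∑ i, u i
      map_add' := by
        intro u v
        simp [Finset.sum_add_distrib]
      map_smul' := by
        intro c u
        simp [Finset.mul_sum] } with hf
  have hg0 : g 0 = 0 := by
    apply WithLp.ofLp_injective
    rw [hg]
    funext i
    simp
  apply Set.Subset.antisymm
  · have hle : affineSpan ℝ (Set.range g) ≤ (LinearMap.ker f).toAffineSubspace := by
      apply affineSpan_le.mpr
      rintro _ ⟨x, rfl⟩
      exact h1 x
    intro u hu
    exact hle hu
  · intro u hu
    have hu' : ∑ i, u i = 0 := hu
    set s : ℝ := Real.sqrt ((∑ j, (u j) ^ 2) / D + ε) with hs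
    have hspos : 0 < s := by
      apply Real.sqrt_pos.mpr
      have h2 : 0 ≤ (∑ j, (u j) ^ 2) / D := by positivity
      linarith
    have hgu : g u = fun i => u i / s := by
      rw [hg]
      funext i
      rw [hu']
      simp
      rfl
    have hkey : s • g u = u := by
      apply WithLp.ofLp_injective
      funext i
      have : (s • g u) i = s * g u i := rfl
      rw [this, hgu]
      field_simp
    have hmem1 : g u ∈ affineSpan ℝ (Set.range g) :=
      subset_affineSpan ℝ _ ⟨u, rfl⟩
    have hmem0 : (0 : EuclideanSpace ℝ (Fin D)) ∈ affineSpan ℝ (Set.range g) :=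
      subset_affineSpan ℝ _ ⟨0, hg0⟩
    have := AffineSubspace.smul_vsub_vadd_mem (affineSpan ℝ (Set.range g)) s hmem1 hmem0 hmem0
    have heq : s • (g u -ᵥ (0 : EuclideanSpace ℝ (Fin D))) +ᵥ (0 : EuclideanSpace ℝ (Fin D)) = u := by
      simpa using hkey
    rwa [heq] at this
end
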